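/- Let $a_1, a_2$ be real numbers with $a_1^2 \ne a_2^2$ and $a_1, a_2 \ne 0$, and let $f : \mathbb{R} \to \mathbb{R}$ be continuous. Define $u(t) = \int_0^t \int_0^{t-\tau}(t - \tau - \tau') \Big(\frac{a_1^2}{a_1^2-a_2^2}\,\frac{\sinh(a_1\tau')}{a_1} + \frac{a_2^2}{a_2^2-a_1^2}\,\frac{\sinh(a_2\tau')}{a_2}\Big) f(\tau)\, d\tau'\, d\tau$. Then $u$ is four times continuously differentiable, $u^{(4)}(t) - (a_1^2 + a_2^2) u''(t) + a_1^2 a_2^2 u(t) = f(t)$ for all $t$, and $u(0) = u'(0) = u''(0) = u'''(0) = 0$. -/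

import Mathlib

/-!
Integrating in `τ'` first, the linear parts of the two kernels cancel and
`u = b₁ W_{a₁} + b₂ W_{a₂}`, where `W_a t = ∫₀ᵗ sinh (a (t - τ)) f τ dτ` and
`bᵢ = 1 / (aᵢ (aᵢ² - aⱼ²))`. Splitting `sinh (a (t - τ))` by the addition formula gives
`W_a' = a C_a` and `C_a' = f + a W_a` for the cosh-convolution `C_a`, so `W_a'' = a f + a² W_a`.
Since `b₁ a₁ + b₂ a₂ = 0` and `b₁ a₁³ + b₂ a₂³ = 1`, the `f`-terms drop out of `u''` and add up
to `f` in `u⁗`, while `(∂² - a₁²)(∂² - a₂²)` annihilates the `W`-terms.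
-/

open Real intervalIntegral

namespace HyperbolicDuhamel

noncomputable def sinhConv (a : ℝ) (f : ℝ → ℝ) (t : ℝ) : ℝ :=
  ∫ τ in (0 : ℝ)..t, sinh (a * (t - τ)) * f τ

noncomputable def coshConv (a : ℝ) (f : ℝ → ℝ) (t : ℝ) : ℝ :=
  ∫ τ in (0 : ℝ)..t, cosh (a * (t - τ)) * f τ

lemma hasDerivAt_sinh_const_mul (a t : ℝ) :
    HasDerivAt (fun t => sinh (a * t)) (a * cosh (a * t)) t := by
  simpa [mul_comm] using ((hasDerivAt_id t).const_mul a).sinh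

lemma hasDerivAt_cosh_const_mul (a t : ℝ) :
    HasDerivAt (fun t => cosh (a * t)) (a * sinh (a * t)) t := by
  simpa [mul_comm] using ((hasDerivAt_id t).const_mul a).cosh

variable {f : ℝ → ℝ}

lemma sinhConv_eq (hf : Continuous f) (a t : ℝ) :
    sinhConv a f t = sinh (a * t) * (∫ τ in (0 : ℝ)..t, cosh (a * τ) * f τ)
      - cosh (a * t) * ∫ τ in (0 : ℝ)..t, sinh (a * τ) * f τ := by
  rw [← integral_const_mul, ← integral_const_mul,
    ← integral_sub (Continuous.intervalIntegrable (by fun_prop) _ _)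
      (Continuous.intervalIntegrable (by fun_prop) _ _)]
  refine integral_congr fun τ _ => ?_
  simp only [mul_sub, sinh_sub]
  ring

lemma coshConv_eq (hf : Continuous f) (a t : ℝ) :
    coshConv a f t = cosh (a * t) * (∫ τ in (0 : ℝ)..t, cosh (a * τ) * f τ)
      - sinh (a * t) * ∫ τ in (0 : ℝ)..t, sinh (a * τ) * f τ := by
  rw [← integral_const_mul, ← integral_const_mul,
    ← integral_sub (Continuous.intervalIntegrable (by fun_prop) _ _)
      (Continuous.intervalIntegrable (by fun_prop) _ _)]
  refine integral_congr fun τ _ => ?_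
  simp only [mul_sub, cosh_sub]
  ring

lemma hasDerivAt_sinhConv (hf : Continuous f) (a t : ℝ) :
    HasDerivAt (sinhConv a f) (a * coshConv a f t) t := by
  have hC := (by fun_prop : Continuous fun τ => cosh (a * τ) * f τ).integral_hasStrictDerivAt 0 t
  have hS := (by fun_prop : Continuous fun τ => sinh (a * τ) * f τ).integral_hasStrictDerivAt 0 t
  rw [funext (sinhConv_eq hf a), coshConv_eq hf]
  refine (((hasDerivAt_sinh_const_mul a t).fun_mul hC.hasDerivAt).fun_sub
    ((hasDerivAt_cosh_const_mul a t).fun_mul hS.hasDerivAt)).congr_deriv ?_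
  ring

lemma hasDerivAt_coshConv (hf : Continuous f) (a t : ℝ) :
    HasDerivAt (coshConv a f) (f t + a * sinhConv a f t) t := by
  have hC := (by fun_prop : Continuous fun τ => cosh (a * τ) * f τ).integral_hasStrictDerivAt 0 t
  have hS := (by fun_prop : Continuous fun τ => sinh (a * τ) * f τ).integral_hasStrictDerivAt 0 t
  rw [funext (coshConv_eq hf a), sinhConv_eq hf]
  refine (((hasDerivAt_cosh_const_mul a t).fun_mul hC.hasDerivAt).fun_sub
    ((hasDerivAt_sinh_const_mul a t).fun_mul hS.hasDerivAt)).congr_deriv ?_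
  linear_combination f t * cosh_sq_sub_sinh_sq (a * t)

lemma sinhConv_zero (a : ℝ) (f : ℝ → ℝ) : sinhConv a f 0 = 0 := by
  simp [sinhConv]

lemma coshConv_zero (a : ℝ) (f : ℝ → ℝ) : coshConv a f 0 = 0 := by
  simp [coshConv]

lemma differentiable_sinhConv (hf : Continuous f) (a : ℝ) : Differentiable ℝ (sinhConv a f) :=
  fun t => (hasDerivAt_sinhConv hf a t).differentiableAt

lemma differentiable_coshConv (hf : Continuous f) (a : ℝ) : Differentiable ℝ (coshConv a f) :=
  fun t => (hasDerivAt_coshConv hf a t).differentiableAt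

lemma contDiff_two_sinhConv (hf : Continuous f) (a : ℝ) : ContDiff ℝ 2 (sinhConv a f) := by
  have hW' : deriv (sinhConv a f) = fun t => a * coshConv a f t :=
    funext fun t => (hasDerivAt_sinhConv hf a t).deriv
  have hC' : deriv (coshConv a f) = fun t => f t + a * sinhConv a f t :=
    funext fun t => (hasDerivAt_coshConv hf a t).deriv
  rw [show (2 : WithTop ℕ∞) = 1 + 1 from rfl, contDiff_succ_iff_deriv, hW']
  refine ⟨differentiable_sinhConv hf a, by simp,
    contDiff_const.mul (contDiff_one_iff_deriv.mpr ⟨differentiable_coshConv hf a, ?_⟩)⟩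
  exact hC' ▸ hf.add (continuous_const.mul (differentiable_sinhConv hf a).continuous)

variable (a₁ a₂ c₁ c₂ : ℝ)

lemma deriv_sinhConv_add (hf : Continuous f) :
    deriv (fun t => c₁ * sinhConv a₁ f t + c₂ * sinhConv a₂ f t) =
      fun t => c₁ * a₁ * coshConv a₁ f t + c₂ * a₂ * coshConv a₂ f t := by
  funext t
  rw [(((hasDerivAt_sinhConv hf a₁ t).const_mul c₁).fun_add
    ((hasDerivAt_sinhConv hf a₂ t).const_mul c₂)).deriv]
  ring

lemma iteratedDeriv_two_sinhConv_add (hf : Continuous f) :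
    iteratedDeriv 2 (fun t => c₁ * sinhConv a₁ f t + c₂ * sinhConv a₂ f t) =
      fun t => (c₁ * a₁ + c₂ * a₂) * f t +
        (c₁ * a₁ ^ 2 * sinhConv a₁ f t + c₂ * a₂ ^ 2 * sinhConv a₂ f t) := by
  rw [iteratedDeriv_succ, iteratedDeriv_one, deriv_sinhConv_add a₁ a₂ c₁ c₂ hf]
  funext t
  rw [(((hasDerivAt_coshConv hf a₁ t).const_mul (c₁ * a₁)).fun_add
    ((hasDerivAt_coshConv hf a₂ t).const_mul (c₂ * a₂))).deriv]
  ring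

lemma iteratedDeriv_two_sinhConv_add_of_eq_zero (hf : Continuous f)
    (hc : c₁ * a₁ + c₂ * a₂ = 0) :
    iteratedDeriv 2 (fun t => c₁ * sinhConv a₁ f t + c₂ * sinhConv a₂ f t) =
      fun t => c₁ * a₁ ^ 2 * sinhConv a₁ f t + c₂ * a₂ ^ 2 * sinhConv a₂ f t := by
  rw [iteratedDeriv_two_sinhConv_add a₁ a₂ c₁ c₂ hf, hc]
  simp only [zero_mul, zero_add]

lemma contDiff_four_sinhConv_add (hf : Continuous f) (hc : c₁ * a₁ + c₂ * a₂ = 0) :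
    ContDiff ℝ 4 (fun t => c₁ * sinhConv a₁ f t + c₂ * sinhConv a₂ f t) := by
  have hdd : deriv (deriv fun t => c₁ * sinhConv a₁ f t + c₂ * sinhConv a₂ f t) =
      iteratedDeriv 2 fun t => c₁ * sinhConv a₁ f t + c₂ * sinhConv a₂ f t := by
    rw [iteratedDeriv_succ, iteratedDeriv_one]
  rw [show (4 : WithTop ℕ∞) = 2 + 1 + 1 from rfl, contDiff_succ_iff_deriv,
    contDiff_succ_iff_deriv, hdd, iteratedDeriv_two_sinhConv_add_of_eq_zero a₁ a₂ c₁ c₂ hf hc,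
    deriv_sinhConv_add a₁ a₂ c₁ c₂ hf]
  refine ⟨?_, by simp, ?_, by simp, ?_⟩
  · exact ((differentiable_sinhConv hf a₁).const_mul c₁).add
      ((differentiable_sinhConv hf a₂).const_mul c₂)
  · exact ((differentiable_coshConv hf a₁).const_mul _).add
      ((differentiable_coshConv hf a₂).const_mul _)
  · exact (contDiff_const.mul (contDiff_two_sinhConv hf a₁)).add
      (contDiff_const.mul (contDiff_two_sinhConv hf a₂))

lemma integral_sub_mul_sinh {a : ℝ} (ha : a ≠ 0) (s : ℝ) :
    ∫ x in (0 : ℝ)..s, (s - x) * sinh (a * x) = sinh (a * s) / a ^ 2 - s / a := by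
  have hF : ∀ x ∈ Set.uIcc 0 s, HasDerivAt
      (fun x => (s - x) * cosh (a * x) / a + sinh (a * x) / a ^ 2) ((s - x) * sinh (a * x)) x := by
    intro x _
    refine ((((hasDerivAt_id' x).const_sub s).fun_mul (hasDerivAt_cosh_const_mul a x)).div_const a
      |>.fun_add ((hasDerivAt_sinh_const_mul a x).div_const (a ^ 2))).congr_deriv ?_
    field_simp
    ring
  rw [integral_eq_sub_of_hasDerivAt hF (Continuous.intervalIntegrable (by fun_prop) _ _)]
  simp only [sub_self, zero_mul, mul_zero, cosh_zero, sinh_zero, sub_zero]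
  ring

lemma integral_sub_mul_sinh_combination (hne : a₁ ^ 2 ≠ a₂ ^ 2) (h₁ : a₁ ≠ 0) (h₂ : a₂ ≠ 0)
    (s : ℝ) :
    ∫ x in (0 : ℝ)..s, (s - x) * (a₁ ^ 2 / (a₁ ^ 2 - a₂ ^ 2) * (sinh (a₁ * x) / a₁) +
        a₂ ^ 2 / (a₂ ^ 2 - a₁ ^ 2) * (sinh (a₂ * x) / a₂)) =
      (a₁ * (a₁ ^ 2 - a₂ ^ 2))⁻¹ * sinh (a₁ * s) + (a₂ * (a₂ ^ 2 - a₁ ^ 2))⁻¹ * sinh (a₂ * s) := by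
  have h₁₂ : a₁ ^ 2 - a₂ ^ 2 ≠ 0 := sub_ne_zero.mpr hne
  have h₂₁ : a₂ ^ 2 - a₁ ^ 2 ≠ 0 := sub_ne_zero.mpr hne.symm
  have hsplit : ∀ x, (s - x) * (a₁ ^ 2 / (a₁ ^ 2 - a₂ ^ 2) * (sinh (a₁ * x) / a₁) +
      a₂ ^ 2 / (a₂ ^ 2 - a₁ ^ 2) * (sinh (a₂ * x) / a₂)) =
      a₁ / (a₁ ^ 2 - a₂ ^ 2) * ((s - x) * sinh (a₁ * x)) +
        a₂ / (a₂ ^ 2 - a₁ ^ 2) * ((s - x) * sinh (a₂ * x)) := by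
    intro x
    field_simp
  simp only [hsplit]
  rw [integral_add (Continuous.intervalIntegrable (by fun_prop) _ _)
      (Continuous.intervalIntegrable (by fun_prop) _ _), integral_const_mul, integral_const_mul,
    integral_sub_mul_sinh h₁, integral_sub_mul_sinh h₂]
  field_simp
  ring

lemma doubleIntegral_eq_sinhConv (hne : a₁ ^ 2 ≠ a₂ ^ 2) (h₁ : a₁ ≠ 0) (h₂ : a₂ ≠ 0)
    (hf : Continuous f) (t : ℝ) :
    ∫ τ in (0 : ℝ)..t, ∫ τ' in (0 : ℝ)..(t - τ),
      (t - τ - τ') * (a₁ ^ 2 / (a₁ ^ 2 - a₂ ^ 2) * (sinh (a₁ * τ') / a₁) +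
        a₂ ^ 2 / (a₂ ^ 2 - a₁ ^ 2) * (sinh (a₂ * τ') / a₂)) * f τ =
      (a₁ * (a₁ ^ 2 - a₂ ^ 2))⁻¹ * sinhConv a₁ f t +
        (a₂ * (a₂ ^ 2 - a₁ ^ 2))⁻¹ * sinhConv a₂ f t := by
  rw [sinhConv, sinhConv, ← integral_const_mul, ← integral_const_mul,
    ← integral_add (Continuous.intervalIntegrable (by fun_prop) _ _)
      (Continuous.intervalIntegrable (by fun_prop) _ _)]
  refine integral_congr fun τ _ => ?_
  rw [integral_mul_const, integral_sub_mul_sinh_combination a₁ a₂ hne h₁ h₂]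
  ring

end HyperbolicDuhamel

open HyperbolicDuhamel in
theorem stmt14 (a₁ a₂ : ℝ) (hne : a₁ ^ 2 ≠ a₂ ^ 2) (h₁ : a₁ ≠ 0) (h₂ : a₂ ≠ 0)
    (f : ℝ → ℝ) (hf : Continuous f) (u : ℝ → ℝ)
    (hu : ∀ t, u t = ∫ τ in (0 : ℝ)..t, ∫ τ' in (0 : ℝ)..(t - τ),
      (t - τ - τ') * (a₁ ^ 2 / (a₁ ^ 2 - a₂ ^ 2) * (Real.sinh (a₁ * τ') / a₁) +
        a₂ ^ 2 / (a₂ ^ 2 - a₁ ^ 2) * (Real.sinh (a₂ * τ') / a₂)) * f τ) :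
    ContDiff ℝ 4 u ∧
      (∀ t, iteratedDeriv 4 u t - (a₁ ^ 2 + a₂ ^ 2) * iteratedDeriv 2 u t +
        a₁ ^ 2 * a₂ ^ 2 * u t = f t) ∧
      u 0 = 0 ∧ deriv u 0 = 0 ∧ iteratedDeriv 2 u 0 = 0 ∧ iteratedDeriv 3 u 0 = 0 := by
  set b₁ := (a₁ * (a₁ ^ 2 - a₂ ^ 2))⁻¹
  set b₂ := (a₂ * (a₂ ^ 2 - a₁ ^ 2))⁻¹
  have h₁₂ : a₁ ^ 2 - a₂ ^ 2 ≠ 0 := sub_ne_zero.mpr hne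
  have h₂₁ : a₂ ^ 2 - a₁ ^ 2 ≠ 0 := sub_ne_zero.mpr hne.symm
  have hb₁ : b₁ * a₁ + b₂ * a₂ = 0 := by simp only [b₁, b₂]; field_simp; ring
  have hb₃ : b₁ * a₁ ^ 2 * a₁ + b₂ * a₂ ^ 2 * a₂ = 1 := by simp only [b₁, b₂]; field_simp; ring
  have hu' : u = fun t => b₁ * sinhConv a₁ f t + b₂ * sinhConv a₂ f t :=
    funext fun t => (hu t).trans (doubleIntegral_eq_sinhConv a₁ a₂ hne h₁ h₂ hf t)
  have hu₂ : iteratedDeriv 2 u =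
      fun t => b₁ * a₁ ^ 2 * sinhConv a₁ f t + b₂ * a₂ ^ 2 * sinhConv a₂ f t := by
    rw [hu', iteratedDeriv_two_sinhConv_add_of_eq_zero _ _ _ _ hf hb₁]
  have hu₄ : iteratedDeriv 4 u = iteratedDeriv 2 (iteratedDeriv 2 u) := by
    simp only [iteratedDeriv_eq_iterate, ← Function.iterate_add_apply]
  rw [hu₂, iteratedDeriv_two_sinhConv_add _ _ _ _ hf, hb₃] at hu₄
  refine ⟨hu' ▸ contDiff_four_sinhConv_add _ _ _ _ hf hb₁, fun t => ?_, ?_, ?_, ?_, ?_⟩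
  · rw [hu₄, hu₂, hu']
    ring
  · simp [hu', sinhConv_zero]
  · simp [hu', deriv_sinhConv_add _ _ _ _ hf, coshConv_zero]
  · simp [hu₂, sinhConv_zero]
  · rw [iteratedDeriv_succ, hu₂, deriv_sinhConv_add _ _ _ _ hf]
    simp [coshConv_zero]
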